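/- arXiv:2002.09650 — 3 statements merged into one kernel-verified Lean document; each statement's English description precedes it below -/
import Mathlib

section
/- Let E be jointly convex on ℝ^m × ℝ^n × ℝ^{m×n}, constrained so that c lies in a closed convex set C, and suppose E attains a minimum at φ* = (α*, β*, c*) over ℝ^m × ℝ^n × C. If the tangent cone of ℝ^m × ℝ^n × C at φ* intersects ker(J) only at 0, where Jφ is the matrix (α_i + β_j − c_{ij})_{ij}, then φ* is the unique minimizer of E over ℝ^m × ℝ^n × C. -/
/-!
The objective splits as `E p = ℓ p + ε ∑ᵢⱼ exp ((J p)ᵢⱼ / ε)` with `ℓ` linear, so by strict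
convexity of `exp` it is strictly convex along every segment `[p, q]` with `J p ≠ J q`. If `φ` were
a second minimizer, the midpoint of `[φ, φ*]` (which lies in the convex feasible set) would have a
strictly smaller value unless `J φ = J φ*`. Hence `φ - φ*` lies in `ker J`, and it lies in the
tangent cone at `φ*` because the feasible set is convex; so `φ = φ*`.
-/

open Real BigOperators

theorem StrictConvexOn.sum_midpoint_lt {ι : Type*} [Fintype ι] {f : ℝ → ℝ}
    (hf : StrictConvexOn ℝ Set.univ f) {a b : ι → ℝ} (hab : a ≠ b) :
    ∑ i, f ((a i + b i) / 2) < (∑ i, f (a i) + ∑ i, f (b i)) / 2 := by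
  have hmid : ∀ i, (a i + b i) / 2 = (1 / 2 : ℝ) • a i + (1 / 2 : ℝ) • b i := fun i => by
    rw [smul_eq_mul, smul_eq_mul]; ring
  obtain ⟨k, hk⟩ := Function.ne_iff.mp hab
  rw [← Finset.sum_add_distrib, Finset.sum_div]
  refine Finset.sum_lt_sum (fun i _ => ?_) ⟨k, Finset.mem_univ k, ?_⟩
  · have := hf.convexOn.2 (Set.mem_univ (a i)) (Set.mem_univ (b i))
      (by norm_num : (0 : ℝ) ≤ 1 / 2) (by norm_num : (0 : ℝ) ≤ 1 / 2) (by norm_num)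
    rw [hmid]; simp only [smul_eq_mul] at this ⊢; linarith
  · have := hf.2 (Set.mem_univ (a k)) (Set.mem_univ (b k)) hk
      (by norm_num : (0 : ℝ) < 1 / 2) (by norm_num : (0 : ℝ) < 1 / 2) (by norm_num)
    rw [hmid]; simp only [smul_eq_mul] at this ⊢; linarith

section EntropicDual

variable {ι κ : Type*} [Fintype ι] [Fintype κ]

/-- The linear map `J` of the paper. -/
def potentialGap : (ι → ℝ) × (κ → ℝ) × Matrix ι κ ℝ →ₗ[ℝ] Matrix ι κ ℝ where
  toFun p := Matrix.of fun i j => p.1 i + p.2.1 j - p.2.2 i j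
  map_add' p q := by
    ext i j
    simp only [Prod.fst_add, Pi.add_apply, Prod.snd_add, Matrix.add_apply, Matrix.of_apply]
    ring
  map_smul' c p := by
    ext i j
    simp only [Prod.smul_fst, Pi.smul_apply, smul_eq_mul, Prod.smul_snd, Matrix.smul_apply,
      Matrix.of_apply, RingHom.id_apply]
    ring

noncomputable def entropicDual (ε : ℝ) (μ : ι → ℝ) (ν : κ → ℝ) (πh : Matrix ι κ ℝ)
    (p : (ι → ℝ) × (κ → ℝ) × Matrix ι κ ℝ) : ℝ :=
  (∑ i, ∑ j, p.2.2 i j * πh i j) - (∑ i, p.1 i * μ i) - (∑ j, p.2.1 j * ν j)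
    + ε * ∑ i, ∑ j, Real.exp (potentialGap p i j / ε)

theorem entropicDual_midpoint_lt {ε : ℝ} (hε : 0 < ε) (μ : ι → ℝ) (ν : κ → ℝ)
    (πh : Matrix ι κ ℝ) {p q : (ι → ℝ) × (κ → ℝ) × Matrix ι κ ℝ}
    (hpq : potentialGap p ≠ potentialGap q) :
    entropicDual ε μ ν πh (midpoint ℝ p q)
      < (entropicDual ε μ ν πh p + entropicDual ε μ ν πh q) / 2 := by
  have hgap : ∀ i j, potentialGap (midpoint ℝ p q) i j / ε
      = (potentialGap p i j / ε + potentialGap q i j / ε) / 2 := by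
    intro i j
    rw [midpoint_eq_smul_add, map_smul, map_add]
    simp only [invOf_eq_inv, Matrix.smul_apply, Matrix.add_apply, smul_eq_mul]
    ring
  have hexp := strictConvexOn_exp.sum_midpoint_lt
    (a := fun x : ι × κ => potentialGap p x.1 x.2 / ε)
    (b := fun x => potentialGap q x.1 x.2 / ε) fun h =>
      hpq (Matrix.ext fun i j => by simpa [div_left_inj' hε.ne'] using congrFun h (i, j))
  simp only [Fintype.sum_prod_type] at hexp
  simp only [entropicDual, hgap]
  rw [midpoint_eq_smul_add]
  simp only [invOf_eq_inv, smul_add, Prod.fst_add, Prod.snd_add, Prod.smul_fst, Prod.smul_snd,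
    Pi.add_apply, Pi.smul_apply, Matrix.add_apply, Matrix.smul_apply, smul_eq_mul, add_mul,
    Finset.sum_add_distrib]
  simp only [mul_assoc, ← Finset.mul_sum]
  linarith [mul_lt_mul_of_pos_left hexp hε]

theorem entropicDual_gap_eq_of_isMinOn {ε : ℝ} (hε : 0 < ε) (μ : ι → ℝ) (ν : κ → ℝ)
    (πh : Matrix ι κ ℝ) {S : Set ((ι → ℝ) × (κ → ℝ) × Matrix ι κ ℝ)} (hS : Convex ℝ S)
    {p q : (ι → ℝ) × (κ → ℝ) × Matrix ι κ ℝ} (hp : p ∈ S) (hq : q ∈ S)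
    (hmin : ∀ r ∈ S, entropicDual ε μ ν πh q ≤ entropicDual ε μ ν πh r)
    (hle : entropicDual ε μ ν πh p ≤ entropicDual ε μ ν πh q) :
    potentialGap p = potentialGap q := by
  by_contra hpq
  linarith [entropicDual_midpoint_lt hε μ ν πh hpq, hmin _ (hS.midpoint_mem hp hq)]

end EntropicDual

theorem stmt_7_general (m n : ℕ) (ε : ℝ) (hε : 0 < ε)
    (μ : Fin m → ℝ) (ν : Fin n → ℝ) (πh : Matrix (Fin m) (Fin n) ℝ)
    (C : Set (Matrix (Fin m) (Fin n) ℝ)) (hCconv : Convex ℝ C)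
    (E : (Fin m → ℝ) × (Fin n → ℝ) × Matrix (Fin m) (Fin n) ℝ → ℝ)
    (hE : E = fun p =>
      (∑ i, ∑ j, p.2.2 i j * πh i j) - (∑ i, p.1 i * μ i) - (∑ j, p.2.1 j * ν j)
        + ε * ∑ i, ∑ j, Real.exp ((p.1 i + p.2.1 j - p.2.2 i j) / ε))
    (S : Set ((Fin m → ℝ) × (Fin n → ℝ) × Matrix (Fin m) (Fin n) ℝ))
    (hS : S = {p | p.2.2 ∈ C})
    (φs : (Fin m → ℝ) × (Fin n → ℝ) × Matrix (Fin m) (Fin n) ℝ)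
    (hmem : φs ∈ S) (hmin : ∀ φ ∈ S, E φs ≤ E φ)
    (hker : ∀ ψ ∈ tangentConeAt ℝ S φs,
      (∀ i j, ψ.1 i + ψ.2.1 j - ψ.2.2 i j = 0) → ψ = 0) :
    ∀ φ ∈ S, E φ ≤ E φs → φ = φs := by
  intro φ hφ hle
  have hEdef : E = entropicDual ε μ ν πh := hE
  subst hEdef
  have hSconv : Convex ℝ S :=
    hS ▸ hCconv.linear_preimage (LinearMap.snd ℝ _ _ ∘ₗ LinearMap.snd ℝ _ _)
  have hgap := entropicDual_gap_eq_of_isMinOn hε μ ν πh hSconv hφ hmem hmin hle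
  have hker_gap : potentialGap (φ - φs) = 0 := by rw [map_sub, hgap, sub_self]
  have hcone := mem_tangentConeAt_of_segment_subset (hSconv.segment_subset hmem hφ)
  exact sub_eq_zero.mp (hker _ hcone fun i j => congrFun (congrFun hker_gap i) j)

theorem stmt_7 (m n : ℕ) (ε : ℝ) (hε : 0 < ε)
    (μ : Fin m → ℝ) (ν : Fin n → ℝ) (πh : Matrix (Fin m) (Fin n) ℝ)
    (C : Set (Matrix (Fin m) (Fin n) ℝ)) (hCclosed : IsClosed C) (hCconv : Convex ℝ C)
    (E : (Fin m → ℝ) × (Fin n → ℝ) × Matrix (Fin m) (Fin n) ℝ → ℝ)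
    (hE : E = fun p =>
      (∑ i, ∑ j, p.2.2 i j * πh i j) - (∑ i, p.1 i * μ i) - (∑ j, p.2.1 j * ν j)
        + ε * ∑ i, ∑ j, Real.exp ((p.1 i + p.2.1 j - p.2.2 i j) / ε))
    (hconv : ConvexOn ℝ Set.univ E)
    (S : Set ((Fin m → ℝ) × (Fin n → ℝ) × Matrix (Fin m) (Fin n) ℝ))
    (hS : S = {p | p.2.2 ∈ C})
    (φs : (Fin m → ℝ) × (Fin n → ℝ) × Matrix (Fin m) (Fin n) ℝ)
    (hmem : φs ∈ S) (hmin : ∀ φ ∈ S, E φs ≤ E φ)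
    (hker : ∀ ψ ∈ tangentConeAt ℝ S φs,
      (∀ i j, ψ.1 i + ψ.2.1 j - ψ.2.2 i j = 0) → ψ = 0) :
    ∀ φ ∈ S, E φ ≤ E φs → φ = φs :=
  stmt_7_general m n ε hε μ ν πh C hCconv E hE S hS φs hmem hmin hker
end

section
/- If the constraint set is C = {c ∈ ℝ^{n×n} : c = cᵀ, c_{ii} = 0 for all i} and (α*, β*, c*) and (ᾱ, β̄, c̄) both minimize E(α, β, c) over ℝ^n × ℝ^n × C, where E is the discrete inverse OT objective, then c* = c̄; i.e., the minimizing cost matrix over symmetric zero-diagonal matrices is unique. -/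
open Real BigOperators

theorem stmt_9 (n : ℕ) (ε : ℝ) (hε : 0 < ε)
    (πh : Matrix (Fin n) (Fin n) ℝ) (hπ : ∀ i j, 0 < πh i j)
    (μ ν : Fin n → ℝ)
    (hμ : ∀ i, μ i = ∑ j, πh i j) (hν : ∀ j, ν j = ∑ i, πh i j)
    (E : (Fin n → ℝ) × (Fin n → ℝ) × Matrix (Fin n) (Fin n) ℝ → ℝ)
    (hE : E = fun p =>
      (∑ i, ∑ j, p.2.2 i j * πh i j) - (∑ i, p.1 i * μ i) - (∑ j, p.2.1 j * ν j)
        + ε * ∑ i, ∑ j, Real.exp ((p.1 i + p.2.1 j - p.2.2 i j) / ε))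
    (S : Set ((Fin n → ℝ) × (Fin n → ℝ) × Matrix (Fin n) (Fin n) ℝ))
    (hS : S = {p | (∀ i j, p.2.2 i j = p.2.2 j i) ∧ ∀ i, p.2.2 i i = 0})
    (p q : (Fin n → ℝ) × (Fin n → ℝ) × Matrix (Fin n) (Fin n) ℝ)
    (hp : p ∈ S) (hq : q ∈ S)
    (hpmin : ∀ r ∈ S, E p ≤ E r) (hqmin : ∀ r ∈ S, E q ≤ E r) :
    p.2.2 = q.2.2 := by
  subst hS
  obtain ⟨hpsym, hpdiag⟩ := hp
  obtain ⟨hqsym, hqdiag⟩ := hq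
  -- the midpoint
  set m : (Fin n → ℝ) × (Fin n → ℝ) × Matrix (Fin n) (Fin n) ℝ :=
    (fun i => (p.1 i + q.1 i) / 2, fun i => (p.2.1 i + q.2.1 i) / 2,
      fun i j => (p.2.2 i j + q.2.2 i j) / 2) with hm_def
  have hmS : m ∈ {r : (Fin n → ℝ) × (Fin n → ℝ) × Matrix (Fin n) (Fin n) ℝ |
      (∀ i j, r.2.2 i j = r.2.2 j i) ∧ ∀ i, r.2.2 i i = 0} := by
    constructor
    · intro i j
      simp only [hm_def]
      rw [hpsym i j, hqsym i j]
    · intro i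
      simp only [hm_def]
      rw [hpdiag i, hqdiag i]
      norm_num
  have h1 : E p ≤ E m := hpmin m hmS
  have h2 : E q ≤ E m := hqmin m hmS
  set A : Fin n → Fin n → ℝ := fun i j => (p.1 i + p.2.1 j - p.2.2 i j) / ε with hA_def
  set B : Fin n → Fin n → ℝ := fun i j => (q.1 i + q.2.1 j - q.2.2 i j) / ε with hB_def
  -- rewrite E as a single double sum
  have hE' : ∀ x : (Fin n → ℝ) × (Fin n → ℝ) × Matrix (Fin n) (Fin n) ℝ,
      E x = ∑ i, ∑ j, (x.2.2 i j * πh i j - x.1 i * πh i j - x.2.1 j * πh i j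
        + ε * Real.exp ((x.1 i + x.2.1 j - x.2.2 i j) / ε)) := by
    intro x
    rw [hE]
    dsimp only
    simp only [hμ, hν, Finset.mul_sum, Finset.sum_add_distrib, Finset.sum_sub_distrib]
    rw [Finset.sum_comm (f := fun j i => x.2.1 j * πh i j)]
  -- the key expansion
  have hmexp : ∀ i j, (m.1 i + m.2.1 j - m.2.2 i j) / ε = (A i j + B i j) / 2 := by
    intro i j
    simp only [hm_def, hA_def, hB_def]
    field_simp
    ring
  have hexpand : E p + E q - 2 * E m
      = ε * ∑ i, ∑ j, (Real.exp (A i j) + Real.exp (B i j)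
          - 2 * Real.exp ((A i j + B i j) / 2)) := by
    rw [hE' p, hE' q, hE' m]
    simp only [hmexp]
    simp only [Finset.mul_sum, two_mul, ← Finset.sum_add_distrib, ← Finset.sum_sub_distrib]
    apply Finset.sum_congr rfl
    intro i _
    apply Finset.sum_congr rfl
    intro j _
    simp only [hm_def, hA_def, hB_def]
    ring
  -- pointwise nonnegativity of the gap terms
  have hsq : ∀ x y : ℝ, Real.exp x + Real.exp y - 2 * Real.exp ((x + y) / 2)
      = (Real.exp (x / 2) - Real.exp (y / 2)) ^ 2 := by
    intro x y
    have hx : Real.exp x = Real.exp (x / 2) * Real.exp (x / 2) := by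
      rw [← Real.exp_add]; congr 1; ring
    have hy : Real.exp y = Real.exp (y / 2) * Real.exp (y / 2) := by
      rw [← Real.exp_add]; congr 1; ring
    have hxy : Real.exp ((x + y) / 2) = Real.exp (x / 2) * Real.exp (y / 2) := by
      rw [← Real.exp_add]; congr 1; ring
    rw [hx, hy, hxy]; ring
  have hF_nonneg : ∀ i j, (0:ℝ) ≤ Real.exp (A i j) + Real.exp (B i j)
      - 2 * Real.exp ((A i j + B i j) / 2) := by
    intro i j
    rw [hsq]
    positivity
  have hsum_le : ∑ i, ∑ j, (Real.exp (A i j) + Real.exp (B i j)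
      - 2 * Real.exp ((A i j + B i j) / 2)) ≤ 0 := by
    nlinarith [hexpand, h1, h2]
  have hsum_eq : ∑ i, ∑ j, (Real.exp (A i j) + Real.exp (B i j)
      - 2 * Real.exp ((A i j + B i j) / 2)) = 0 := by
    have h0 : (0:ℝ) ≤ ∑ i, ∑ j, (Real.exp (A i j) + Real.exp (B i j)
        - 2 * Real.exp ((A i j + B i j) / 2)) :=
      Finset.sum_nonneg fun i _ => Finset.sum_nonneg fun j _ => hF_nonneg i j
    linarith
  have hAB : ∀ i j, A i j = B i j := by
    intro i j
    have hz : Real.exp (A i j) + Real.exp (B i j)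
        - 2 * Real.exp ((A i j + B i j) / 2) = 0 := by
      have := (Finset.sum_eq_zero_iff_of_nonneg
        (fun i _ => Finset.sum_nonneg fun j _ => hF_nonneg i j)).mp hsum_eq i
        (Finset.mem_univ i)
      exact (Finset.sum_eq_zero_iff_of_nonneg
        (fun j _ => hF_nonneg i j)).mp this j (Finset.mem_univ j)
    rw [hsq] at hz
    have h5 : Real.exp (A i j / 2) = Real.exp (B i j / 2) := by
      have := sq_eq_zero_iff.mp hz
      linarith
    have := Real.exp_injective h5
    linarith
  -- translate back to the matrices
  have hrel : ∀ i j, p.2.2 i j - q.2.2 i j = (p.1 i - q.1 i) + (p.2.1 j - q.2.1 j) := by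
    intro i j
    have h := hAB i j
    simp only [hA_def, hB_def] at h
    rw [div_eq_div_iff (ne_of_gt hε) (ne_of_gt hε)] at h
    have hεne : ε ≠ 0 := ne_of_gt hε
    have h2 : p.1 i + p.2.1 j - p.2.2 i j = q.1 i + q.2.1 j - q.2.2 i j :=
      mul_right_cancel₀ hεne h
    linarith
  funext i j
  have e1 := hrel i j
  have e2 := hrel j i
  have e3 := hrel i i
  have e4 := hrel j j
  have e5 : p.2.2 i j = p.2.2 j i := hpsym i j
  have e6 : q.2.2 i j = q.2.2 j i := hqsym i j
  have e7 := hpdiag i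
  have e8 := hpdiag j
  have e9 := hqdiag i
  have e10 := hqdiag j
  have : p.2.2 i j - q.2.2 i j = 0 := by linarith
  linarith
end

section
/- Let s(α, β, c) := ε ∑_{i,j} exp((α_i + β_j − c_{ij})/ε) with ε > 0, fix β ∈ ℝ^n and c ∈ ℝ^{m×n} with 0 ≤ c_{ij} ≤ M_c, and suppose α* minimizes F(α) := −⟨α, μ⟩ + ε log(∑_{i,j} exp((α_i + β_j − c_{ij})/ε)) where μ ∈ ℝ^m has strictly positive entries summing to 1. Then the first-order optimality condition exp(α*_i/ε) ∑_j exp((β_j − c_{ij})/ε) / ∑_{k,j} exp((α*_k + β_j − c_{kj})/ε) = μ_i holds for all i, and max_{i,k} |α*_i − α*_k| ≤ M_c + ε log(μ_max/μ_min). -/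
/-!
Factor the kernel as `∑ i j, exp ((α i + β j - c i j) / ε) = ∑ i, exp (α i / ε) * S i` with
`S i = ∑ j, exp ((β j - c i j) / ε)`, so `F` is a log-sum-exp in `α`. Moving only the coordinate
`α i` and setting the derivative to zero at the minimizer gives the Gibbs equation
`exp (α i / ε) * S i / Z = μ i`; the partition function `Z` cannot vanish, since `F` would then be
linear and unbounded below. Dividing two Gibbs equations gives
`exp ((α i - α k) / ε) = (μ i / μ k) * (S k / S i)`, and `0 ≤ c ≤ Mc` gives `S k ≤ exp (Mc / ε) * S i`.
-/

open Real Finset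

section Gibbs

variable {ι : Type*} {ε : ℝ} {μ w α : ι → ℝ}

noncomputable def gibbsObjective [Fintype ι] (ε : ℝ) (μ w α : ι → ℝ) : ℝ :=
  -(∑ k, α k * μ k) + ε * log (∑ k, exp (α k / ε) * w k)

theorem gibbsObjective_partition_ne_zero [Fintype ι] (hμ : ∑ k, μ k ≠ 0) (hw : ∀ k, 0 ≤ w k)
    (hmin : ∀ α', gibbsObjective ε μ w α ≤ gibbsObjective ε μ w α') :
    ∑ k, exp (α k / ε) * w k ≠ 0 := by
  intro hT
  have hw0 : ∀ k, w k = 0 := by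
    intro k
    have := (sum_eq_zero_iff_of_nonneg fun k _ => mul_nonneg (exp_pos (α k / ε)).le (hw k)).1
      hT k (mem_univ k)
    simpa [(exp_pos _).ne'] using this
  set s := ∑ k, μ k
  have h := hmin (fun k => α k + s)
  simp only [gibbsObjective, hw0, mul_zero, sum_const_zero, log_zero, add_mul, sum_add_distrib,
    ← mul_sum] at h
  nlinarith [sq_pos_of_ne_zero hμ]

theorem exp_mul_div_sum_eq_of_forall_le [Fintype ι] [DecidableEq ι] (hε : ε ≠ 0)
    (hT : ∑ k, exp (α k / ε) * w k ≠ 0)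
    (hmin : ∀ α', gibbsObjective ε μ w α ≤ gibbsObjective ε μ w α') (i : ι) :
    exp (α i / ε) * w i / ∑ k, exp (α k / ε) * w k = μ i := by
  set e : ι → ℝ := Pi.single i 1
  have hlin : HasDerivAt (fun t : ℝ => ∑ k, (α k + t * e k) * μ k) (μ i) 0 := by
    refine (HasDerivAt.fun_sum fun k _ =>
      ((hasDerivAt_mul_const (e k)).const_add (α k)).mul_const (μ k)).congr_deriv ?_
    simp [e, Pi.single_apply]
  have hpart : HasDerivAt (fun t : ℝ => ∑ k, exp ((α k + t * e k) / ε) * w k)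
      (exp (α i / ε) * w i / ε) 0 := by
    refine (HasDerivAt.fun_sum fun k _ => ((((hasDerivAt_mul_const (e k)).const_add (α k)).div_const
      ε).exp).mul_const (w k)).congr_deriv ?_
    rw [sum_eq_single i (fun k _ hk => by simp [e, hk]) (by simp)]
    simp [e]
    ring
  have hderiv := (hlin.neg.add ((hpart.log (by simpa using hT)).const_mul ε))
  have hloc : IsLocalMin (fun t : ℝ => gibbsObjective ε μ w (fun k => α k + t * e k)) 0 :=
    Filter.Eventually.of_forall fun t => by simpa using hmin _
  have hzero := hloc.hasDerivAt_eq_zero hderiv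
  simp only [zero_mul, add_zero] at hzero
  field_simp at hzero
  rw [div_eq_iff hT]
  linarith

theorem exp_sub_div_eq_of_gibbs {T : ℝ} (hμ : ∀ i, μ i ≠ 0)
    (hα : ∀ i, exp (α i / ε) * w i / T = μ i) (i k : ι) :
    exp ((α i - α k) / ε) = μ i / μ k * (w k / w i) := by
  have hT : T ≠ 0 := fun h => hμ i (by simp [← hα i, h])
  have hw : ∀ i, w i ≠ 0 := fun i h => hμ i (by simp [← hα i, h])
  have hi := hα i
  have hk := hα k
  rw [div_eq_iff hT] at hi hk
  rw [sub_div, exp_sub, div_eq_iff (exp_pos _).ne']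
  have := hμ k
  have := hw i
  field_simp
  linear_combination μ k * hi - μ i * hk

theorem sum_exp_div_le_exp_mul_sum {κ : Type*} [Fintype κ] (hε : 0 ≤ ε) {f g : κ → ℝ} {M : ℝ}
    (h : ∀ j, f j ≤ g j + M) :
    ∑ j, exp (f j / ε) ≤ exp (M / ε) * ∑ j, exp (g j / ε) := by
  rw [mul_sum]
  gcongr with j
  rw [← exp_add, ← add_div, add_comm]
  gcongr
  exact h j

theorem sub_le_of_gibbs {T M : ℝ} (hε : 0 < ε) (hμ : ∀ i, 0 < μ i) (hw : ∀ i, 0 ≤ w i)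
    (hwM : ∀ i k, w k ≤ exp (M / ε) * w i)
    (hα : ∀ i, exp (α i / ε) * w i / T = μ i) (i k : ι) :
    α i - α k ≤ M + ε * log (μ i / μ k) := by
  have hwi : 0 < w i := (hw i).lt_of_ne fun h => (hμ i).ne' (by simp [← hα i, ← h])
  have hratio : w k / w i ≤ exp (M / ε) := (div_le_iff₀ hwi).2 (hwM i k)
  have hexp := exp_sub_div_eq_of_gibbs (fun i => (hμ i).ne') hα i k
  have hle : (α i - α k) / ε ≤ log (μ i / μ k) + M / ε := by
    rw [← exp_le_exp, hexp, exp_add, exp_log (div_pos (hμ i) (hμ k))]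
    gcongr
    exact (div_pos (hμ i) (hμ k)).le
  rw [div_le_iff₀ hε, add_mul, div_mul_cancel₀ _ hε.ne'] at hle
  linarith

end Gibbs

theorem sum_sum_exp_add_sub_div {m n : ℕ} (ε : ℝ) (α : Fin m → ℝ) (β : Fin n → ℝ)
    (c : Matrix (Fin m) (Fin n) ℝ) :
    ∑ i, ∑ j, exp ((α i + β j - c i j) / ε) =
      ∑ i, exp (α i / ε) * ∑ j, exp ((β j - c i j) / ε) := by
  refine sum_congr rfl fun i _ => ?_
  rw [mul_sum]
  refine sum_congr rfl fun j _ => ?_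
  rw [← exp_add]
  ring_nf

theorem stmt_13_general (m n : ℕ) (ε : ℝ) (hε : 0 < ε) (Mc : ℝ)
    (β : Fin n → ℝ) (c : Matrix (Fin m) (Fin n) ℝ)
    (hc : ∀ i j, 0 ≤ c i j ∧ c i j ≤ Mc)
    (μ : Fin m → ℝ) (hμpos : ∀ i, 0 < μ i)
    (F : (Fin m → ℝ) → ℝ)
    (hF : F = fun α => -(∑ i, α i * μ i)
      + ε * Real.log (∑ i, ∑ j, Real.exp ((α i + β j - c i j) / ε)))
    (αs : Fin m → ℝ) (hmin : ∀ α, F αs ≤ F α)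
    (imax imin : Fin m)
    (himax : ∀ i, μ i ≤ μ imax) (himin : ∀ i, μ imin ≤ μ i) :
    (∀ i, Real.exp (αs i / ε) * (∑ j, Real.exp ((β j - c i j) / ε))
        / (∑ k, ∑ j, Real.exp ((αs k + β j - c k j) / ε)) = μ i) ∧
    ∀ i k, |αs i - αs k| ≤ Mc + ε * Real.log (μ imax / μ imin) := by
  subst hF
  set S : Fin m → ℝ := fun i => ∑ j, exp ((β j - c i j) / ε)
  have hpart := fun α => sum_sum_exp_add_sub_div ε α β c
  have hmin' : ∀ α, gibbsObjective ε μ S αs ≤ gibbsObjective ε μ S α := by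
    simpa only [gibbsObjective, hpart] using hmin
  have hS : ∀ i, 0 ≤ S i := fun i => sum_nonneg fun j _ => (exp_pos _).le
  have hT := gibbsObjective_partition_ne_zero
    (sum_pos (fun i _ => hμpos i) ⟨imax, mem_univ _⟩).ne' hS hmin'
  have hgibbs := exp_mul_div_sum_eq_of_forall_le hε.ne' hT hmin'
  have hSM : ∀ i k, S k ≤ exp (Mc / ε) * S i := fun i k =>
    sum_exp_div_le_exp_mul_sum hε.le fun j => by linarith [(hc i j).2, (hc k j).1]
  have hlog : ∀ i k, log (μ i / μ k) ≤ log (μ imax / μ imin) := fun i k =>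
    log_le_log (div_pos (hμpos i) (hμpos k))
      (div_le_div₀ (hμpos imax).le (himax i) (hμpos imin) (himin k))
  have hosc : ∀ i k, αs i - αs k ≤ Mc + ε * log (μ imax / μ imin) := fun i k =>
    (sub_le_of_gibbs hε hμpos hS hSM hgibbs i k).trans (by gcongr Mc + ε * ?_; exact hlog i k)
  exact ⟨fun i => by rw [hpart]; exact hgibbs i, fun i k => abs_sub_le_iff.2 ⟨hosc i k, hosc k i⟩⟩

theorem stmt_13 (m n : ℕ) (ε : ℝ) (hε : 0 < ε) (Mc : ℝ) (hMc : 0 ≤ Mc)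
    (β : Fin n → ℝ) (c : Matrix (Fin m) (Fin n) ℝ)
    (hc : ∀ i j, 0 ≤ c i j ∧ c i j ≤ Mc)
    (μ : Fin m → ℝ) (hμpos : ∀ i, 0 < μ i) (hμsum : ∑ i, μ i = 1)
    (F : (Fin m → ℝ) → ℝ)
    (hF : F = fun α => -(∑ i, α i * μ i)
      + ε * Real.log (∑ i, ∑ j, Real.exp ((α i + β j - c i j) / ε)))
    (αs : Fin m → ℝ) (hmin : ∀ α, F αs ≤ F α)
    (imax imin : Fin m)
    (himax : ∀ i, μ i ≤ μ imax) (himin : ∀ i, μ imin ≤ μ i) :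
    (∀ i, Real.exp (αs i / ε) * (∑ j, Real.exp ((β j - c i j) / ε))
        / (∑ k, ∑ j, Real.exp ((αs k + β j - c k j) / ε)) = μ i) ∧
    ∀ i k, |αs i - αs k| ≤ Mc + ε * Real.log (μ imax / μ imin) :=
  stmt_13_general m n ε hε Mc β c hc μ hμpos F hF αs hmin imax imin himax himin
end
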